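/- Let F₁, F₂ be d-dimensional inner product distributions, and let A₁ ~ RDPG(F₁,n) and A₂ ~ RDPG(F₂,n). Then for every p ≥ 1, W_{GM,p}^p(A₁,A₂) ≤ 2 d̊₁(F₁,F₂). -/

import Mathlib

open MeasureTheory Filter Matrix
open scoped BigOperators NNReal ENNReal Topology Classical

noncomputable section

/-- Dot product on `Fin d → ℝ`. -/
def dotd {d : ℕ} (x y : Fin d → ℝ) : ℝ := ∑ k, x k * y k

/-- Euclidean norm on `Fin d → ℝ`. -/
def euclNorm {d : ℕ} (x : Fin d → ℝ) : ℝ := Real.sqrt (∑ k, (x k) ^ 2)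

/-- Support of a measure on a topological space. -/
def msupport {α : Type*} [TopologicalSpace α] [MeasurableSpace α] (μ : Measure α) : Set α :=
  {x | ∀ U : Set α, IsOpen U → x ∈ U → 0 < μ U}

/-- `F` is a `d`-dimensional inner product distribution. -/
def InnerProductDistribution (d : ℕ) (F : Measure (Fin d → ℝ)) : Prop :=
  IsProbabilityMeasure F ∧
    ∀ x ∈ msupport F, ∀ y ∈ msupport F, 0 ≤ dotd x y ∧ dotd x y ≤ 1

/-- Auxiliary i.i.d. uniform randomness on `[0,1]`, indexed by pairs of vertices. -/
def pairUniform (n : ℕ) : Measure ((Fin n × Fin n) → ℝ) :=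
  Measure.pi fun _ => volume.restrict (Set.Icc (0:ℝ) 1)

/-- The adjacency matrix built from latent positions `X`, sparsity scale `ρ`, and auxiliary
uniform variables `u`: conditional on `X`, the entries above the diagonal are independent
`Bernoulli(ρ ⟨X i, X j⟩)`, and the matrix is symmetric and hollow. -/
def adjOf {d n : ℕ} (ρ : ℝ) (X : Fin n → Fin d → ℝ) (u : (Fin n × Fin n) → ℝ) :
    Fin n → Fin n → ℝ := fun i j =>
  if i = j then 0 else if u (min i j, max i j) < ρ * dotd (X i) (X j) then 1 else 0

/-- The joint law of `(A, X)` for a (possibly sparse) random dot product graph whose latent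
positions have joint law `μX`. -/
def rdpgLawOf {d n : ℕ} (ρ : ℝ) (μX : Measure (Fin n → Fin d → ℝ)) :
    Measure ((Fin n → Fin n → ℝ) × (Fin n → Fin d → ℝ)) :=
  Measure.map (fun p => (adjOf ρ p.2 p.1, p.2)) ((pairUniform n).prod μX)

/-- The joint law of `(A,X) ~ RDPG(F, n)`. -/
def rdpgLaw (d n : ℕ) (F : Measure (Fin d → ℝ)) [SigmaFinite F] :
    Measure ((Fin n → Fin n → ℝ) × (Fin n → Fin d → ℝ)) :=
  rdpgLawOf 1 (Measure.pi fun _ : Fin n => F)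

/-- `(A, X) ~ RDPG(F, n)` for random variables `A, X` on a probability space `(Ω, P)`. -/
def HasRDPGLaw {Ω : Type*} [MeasurableSpace Ω] (P : Measure Ω) {d n : ℕ}
    (F : Measure (Fin d → ℝ)) [SigmaFinite F] (A : Ω → Fin n → Fin n → ℝ)
    (X : Ω → Fin n → Fin d → ℝ) : Prop :=
  Measure.map (fun ω => (A ω, X ω)) P = rdpgLaw d n F

/-- The marginal law of the adjacency matrix of an `RDPG(F,n)`. -/
def adjLaw (d n : ℕ) (F : Measure (Fin d → ℝ)) [SigmaFinite F] :
    Measure (Fin n → Fin n → ℝ) :=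
  (rdpgLaw d n F).map Prod.fst

/-- The law of the adjacency matrix for fixed latent positions `x`. -/
def adjLawFixed {d : ℕ} (n : ℕ) (x : Fin n → Fin d → ℝ) : Measure (Fin n → Fin n → ℝ) :=
  Measure.map (fun u => adjOf 1 x u) (pairUniform n)

/-- `Xh` is an adjacency spectral embedding of `A` into dimension `d`: its columns are
orthonormal eigenvectors of `A` corresponding to the `d` largest-in-magnitude eigenvalues,
scaled by the square roots of the absolute eigenvalues. -/
def IsASE {n d : ℕ} (A : Fin n → Fin n → ℝ) (Xh : Fin n → Fin d → ℝ) : Prop :=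
  ∃ (lam : Fin d → ℝ) (U : Fin n → Fin d → ℝ),
    (∀ j j', (∑ i, U i j * U i j') = if j = j' then (1:ℝ) else 0) ∧
    (∀ j, (Matrix.of A).mulVec (fun i => U i j) = fun i => lam j * U i j) ∧
    (∀ (mu : ℝ) (v : Fin n → ℝ), v ≠ 0 → (Matrix.of A).mulVec v = mu • v →
      (∀ j, (∑ i, v i * U i j) = 0) → ∀ j, |mu| ≤ |lam j|) ∧
    (∀ i j, Xh i j = U i j * Real.sqrt |lam j|)

/-- A choice of adjacency spectral embedding of `A` into dimension `d`. -/
def ase (d : ℕ) {n : ℕ} (A : Fin n → Fin n → ℝ) : Fin n → Fin d → ℝ :=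
  if h : ∃ Xh, IsASE A Xh then h.choose else 0

/-- The U-statistic with kernel `h` of the points `Y 1, …, Y n`. -/
def Ustat {d : ℕ} (m n : ℕ) (h : (Fin m → Fin d → ℝ) → ℝ) (Y : Fin n → Fin d → ℝ) : ℝ :=
  ((n.choose m : ℝ))⁻¹ * ∑ c : Fin m → Fin n,
    if StrictMono c then h (fun k => Y (c k)) else 0

/-- The weighted (bootstrapped) U-statistic with kernel `h` and weights `W` (indexed by the
strictly increasing `m`-tuples). -/
def UstatW {d : ℕ} (m n : ℕ) (h : (Fin m → Fin d → ℝ) → ℝ)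
    (W : (Fin m → Fin n) → ℝ) (Y : Fin n → Fin d → ℝ) : ℝ :=
  ((n.choose m : ℝ))⁻¹ * ∑ c : Fin m → Fin n,
    if StrictMono c then W c * h (fun k => Y (c k)) else 0

/-- `max_{c ∈ C^n_m} |W c|`. -/
def maxAbsWeight {m n : ℕ} (W : (Fin m → Fin n) → ℝ) : ℝ :=
  ⨆ c : Fin m → Fin n, if StrictMono c then |W c| else 0

/-- `h` is symmetric in its `m` arguments. -/
def SymmetricKernel {d m : ℕ} (h : (Fin m → Fin d → ℝ) → ℝ) : Prop :=
  ∀ (σ : Equiv.Perm (Fin m)) (x : Fin m → Fin d → ℝ), h (x ∘ σ) = h x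

/-- Assumption H1: `h` is invariant under simultaneous orthogonal transformation of
its arguments. -/
def AssumptionH1 {d m : ℕ} (h : (Fin m → Fin d → ℝ) → ℝ) : Prop :=
  ∀ Q : Matrix (Fin d) (Fin d) ℝ, Qᵀ * Q = 1 →
    ∀ x : Fin m → Fin d → ℝ, h (fun k => Q.mulVec (x k)) = h x

/-- Assumption H2 relative to a set `K₀ ⊆ ℝ^d`: viewing `h` as a function on `ℝ^{md}`,
`h` is twice continuously differentiable on an open neighborhood `S` of `K₀^m` on which its
Hessian is bounded in norm, and the Hessian is continuous on the closure of `K₀^m`. -/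
def AssumptionH2On {d m : ℕ} (K₀ : Set (Fin d → ℝ)) (h : (Fin m → Fin d → ℝ) → ℝ) : Prop :=
  ∃ S : Set (Fin m → Fin d → ℝ), IsOpen S ∧ {x | ∀ k, x k ∈ K₀} ⊆ S ∧
    ContDiffOn ℝ 2 h S ∧
    ContinuousOn (iteratedFDeriv ℝ 2 h) (closure {x | ∀ k, x k ∈ K₀}) ∧
    ∃ C : ℝ, ∀ x ∈ S, ‖iteratedFDeriv ℝ 2 h x‖ ≤ C

/-- Assumption H2 for an RDPG with latent position distribution `F`. -/
def AssumptionH2 {d m : ℕ} (F : Measure (Fin d → ℝ)) (h : (Fin m → Fin d → ℝ) → ℝ) : Prop :=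
  AssumptionH2On (msupport F) h

/-- `θ(F) = E h(X₁, …, X_m)` for `X₁, …, X_m` i.i.d. `F`. -/
def thetaOf {d : ℕ} (m : ℕ) (F : Measure (Fin d → ℝ)) [SigmaFinite F]
    (h : (Fin m → Fin d → ℝ) → ℝ) : ℝ :=
  ∫ x, h x ∂(Measure.pi fun _ : Fin m => F)

/-- The conditional expectation kernel `h₁(z) = E h(z, X₂, …, X_m)`. -/
def kern1 {d : ℕ} (m : ℕ) (hm : 0 < m) (F : Measure (Fin d → ℝ)) [SigmaFinite F]
    (h : (Fin m → Fin d → ℝ) → ℝ) (z : Fin d → ℝ) : ℝ :=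
  ∫ x, h (Function.update x (⟨0, hm⟩ : Fin m) z) ∂(Measure.pi fun _ : Fin m => F)

/-- `ζ₁ = E (E[h(X₁,…,X_m) ∣ X₁] − θ)²`. -/
def zeta1 {d : ℕ} (m : ℕ) (hm : 0 < m) (F : Measure (Fin d → ℝ)) [SigmaFinite F]
    (h : (Fin m → Fin d → ℝ) → ℝ) : ℝ :=
  ∫ z, (kern1 m hm F h z - thetaOf m F h) ^ 2 ∂F

/-- Weak convergence (convergence in distribution) of a sequence of real random variables
`T n` on `(Ω, P)` to the law `μ`, tested against bounded continuous functions. -/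
def TendstoInDistribution {Ω : Type*} [MeasurableSpace Ω] (P : Measure Ω)
    (T : ℕ → Ω → ℝ) (μ : Measure ℝ) : Prop :=
  ∀ g : BoundedContinuousFunction ℝ ℝ,
    Tendsto (fun n => ∫ ω, g (T n ω) ∂P) atTop (𝓝 (∫ x, g x ∂μ))

/-- The uniform distribution on `Fin n`. -/
def uniformFin (n : ℕ) : Measure (Fin n) := ((n : ℝ≥0))⁻¹ • Measure.count

/-- The empirical distribution of the points `Y 1, …, Y n`. -/
def empMeasure {d n : ℕ} (Y : Fin n → Fin d → ℝ) : Measure (Fin d → ℝ) :=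
  ((n : ℝ≥0))⁻¹ • ∑ i : Fin n, Measure.dirac (Y i)

instance {d n : ℕ} (Y : Fin n → Fin d → ℝ) : IsFiniteMeasure (empMeasure Y) := by
  unfold empMeasure; infer_instance

/-- The law of the bootstrapped network `Â*`: having observed `A ~ RDPG(F,n)` (in its
adjacency marginal), draw `Â* ~ RDPG(F̂_n, n)` where `F̂_n` is the empirical distribution
of the rows of the adjacency spectral embedding of `A`. -/
def bootLaw (d n : ℕ) (F : Measure (Fin d → ℝ)) [SigmaFinite F] :
    Measure (Fin n → Fin n → ℝ) :=
  (adjLaw d n F).bind fun a => adjLaw d n (empMeasure (ase d a))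

/-- `ρ̂ = binom(n,2)⁻¹ Σ_{i<j} A_{ij}`, the empirical edge density. -/
def rhoHat {n : ℕ} (A : Fin n → Fin n → ℝ) : ℝ :=
  ((n.choose 2 : ℝ))⁻¹ * ∑ i, ∑ j, if i < j then A i j else 0

/-- The (normalized) average degree. -/
def avgDegree {n : ℕ} (A : Fin n → Fin n → ℝ) : ℝ :=
  (n : ℝ)⁻¹ * ∑ i, (∑ j, if j ≠ i then A i j else 0) / ((n : ℝ) - 1)

/-- The subgraph-counting kernel `h_R` associated with a graph `R` on `m` vertices. -/
def subgraphKernel {m : ℕ} (d : ℕ) (R : SimpleGraph (Fin m)) (x : Fin m → Fin d → ℝ) : ℝ :=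
  ((Nat.card {G : SimpleGraph (Fin m) // Nonempty (G ≃g R)} : ℝ))⁻¹ *
    ∑ τ : Equiv.Perm (Fin m), ∏ p : Fin m × Fin m,
      if p.1 < p.2 then
        (if R.Adj p.1 p.2 then dotd (x (τ p.1)) (x (τ p.2))
          else 1 - dotd (x (τ p.1)) (x (τ p.2)))
      else 1

/-- The empirical subgraph density `P̂(R)` of `R` in the graph with adjacency matrix `A`:
the proportion of `m`-subsets of vertices whose induced subgraph is isomorphic to `R`. -/
def subgraphDensity {m n : ℕ} (R : SimpleGraph (Fin m)) (A : Fin n → Fin n → ℝ) : ℝ :=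
  ((n.choose m : ℝ))⁻¹ * ∑ c : Fin m → Fin n,
    if StrictMono c ∧ (∃ σ : Equiv.Perm (Fin m), ∀ k l : Fin m, k ≠ l →
        (A (c (σ k)) (c (σ l)) = 1 ↔ R.Adj k l)) then (1:ℝ) else 0

/-- The entrywise ℓ¹ norm of a matrix. -/
def matL1 {n : ℕ} (M : Fin n → Fin n → ℝ) : ℝ := ∑ i, ∑ j, |M i j|

/-- The graph matching distance between two `n`-vertex graphs. -/
def dGM {n : ℕ} (A B : Fin n → Fin n → ℝ) : ℝ :=
  ⨅ σ : Equiv.Perm (Fin n),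
    ((n.choose 2 : ℝ))⁻¹ * (∑ i, ∑ j, |A i j - B (σ i) (σ j)|) / 2

/-- The set of couplings of two measures. -/
def Couplings {α β : Type*} [MeasurableSpace α] [MeasurableSpace β]
    (μ : Measure α) (ν : Measure β) : Set (Measure (α × β)) :=
  {γ | IsProbabilityMeasure γ ∧ γ.map Prod.fst = μ ∧ γ.map Prod.snd = ν}

/-- `W_{GM,p}^p`: the `p`-th power of the graph-matching Wasserstein distance between two
laws of random adjacency matrices. -/
def WGMpow {n : ℕ} (p : ℝ) (μ ν : Measure (Fin n → Fin n → ℝ)) : ℝ :=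
  sInf ((fun γ => ∫ q, dGM q.1 q.2 ^ p ∂γ) '' Couplings μ ν)

/-- The Wasserstein `p`-distance between two distributions on `ℝ^d` (with Euclidean cost). -/
def wassersteinP {d : ℕ} (p : ℝ) (μ ν : Measure (Fin d → ℝ)) : ℝ :=
  sInf ((fun γ => (∫ q, euclNorm (q.1 - q.2) ^ p ∂γ) ^ (1/p)) '' Couplings μ ν)

/-- `d̊_p(F₁,F₂) = min_{Q ∈ O(d)} d_p(F₁, F₂ ∘ Q)`. -/
def ringWasserstein {d : ℕ} (p : ℝ) (μ ν : Measure (Fin d → ℝ)) : ℝ :=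
  sInf {r | ∃ Q : Matrix (Fin d) (Fin d) ℝ, Qᵀ * Q = 1 ∧
    r = wassersteinP p μ (ν.map fun x => Q.mulVec x)}

/-- The Frobenius norm of a matrix. -/
def frobNorm {n d : ℕ} (M : Matrix (Fin n) (Fin d) ℝ) : ℝ :=
  Real.sqrt (∑ i, ∑ j, (M i j) ^ 2)

/-- The `2→∞` norm of a matrix: the maximum Euclidean norm of a row. -/
def twoInftyNorm {n d : ℕ} (M : Matrix (Fin n) (Fin d) ℝ) : ℝ := ⨆ i, euclNorm (M i)

/-- `U`, `lam` form a rank-`d` spectral decomposition of the symmetric matrix `Pm`: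
the columns of `U` are orthonormal eigenvectors with eigenvalues `lam`, and
`Pm = U · diag(lam) · Uᵀ`. -/
def IsSpecDecomp {n d : ℕ} (Pm : Fin n → Fin n → ℝ) (U : Fin n → Fin d → ℝ)
    (lam : Fin d → ℝ) : Prop :=
  (∀ j j', (∑ i, U i j * U i j') = if j = j' then (1:ℝ) else 0) ∧
  (∀ j, (Matrix.of Pm).mulVec (fun i => U i j) = fun i => lam j * U i j) ∧
  (∀ i i', Pm i i' = ∑ j, U i j * lam j * U i' j)

/-- `U`, `lam` are orthonormal eigenvectors of `A` for its `d` largest-in-magnitude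
eigenvalues. -/
def IsTopSpec {n d : ℕ} (A : Fin n → Fin n → ℝ) (U : Fin n → Fin d → ℝ)
    (lam : Fin d → ℝ) : Prop :=
  (∀ j j', (∑ i, U i j * U i j') = if j = j' then (1:ℝ) else 0) ∧
  (∀ j, (Matrix.of A).mulVec (fun i => U i j) = fun i => lam j * U i j) ∧
  (∀ (mu : ℝ) (v : Fin n → ℝ), v ≠ 0 → (Matrix.of A).mulVec v = mu • v →
    (∀ j, (∑ i, v i * U i j) = 0) → ∀ j, |mu| ≤ |lam j|)

/-- The `2→∞` bound with constant `C`: `max_i ‖Qᵀ Xh_i − X_i‖ ≤ C log n / √n`. -/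
def TwoToInftyBound {n d : ℕ} (C : ℝ) (Xh X : Fin n → Fin d → ℝ)
    (Q : Matrix (Fin d) (Fin d) ℝ) : Prop :=
  ∀ i, euclNorm (Qᵀ.mulVec (Xh i) - X i) ≤ C * Real.log n / Real.sqrt n

/-- The second moment matrix `Δ = E X₁ X₁ᵀ` of a distribution `F` on `ℝ^d`. -/
def secondMoment {d : ℕ} (F : Measure (Fin d → ℝ)) : Matrix (Fin d) (Fin d) ℝ :=
  Matrix.of fun i j => ∫ x, x i * x j ∂F


namespace GMHelpers

lemma continuous_euclNorm {d : ℕ} : Continuous fun x : Fin d → ℝ => euclNorm x := by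
  unfold euclNorm
  exact Real.continuous_sqrt.comp (continuous_finset_sum _ fun k _ => (continuous_apply k).pow 2)

lemma euclNorm_nonneg {d : ℕ} (x : Fin d → ℝ) : 0 ≤ euclNorm x := Real.sqrt_nonneg _

lemma abs_dotd_le {d : ℕ} (x y : Fin d → ℝ) : |dotd x y| ≤ euclNorm x * euclNorm y := by
  have h1 := Real.sum_mul_le_sqrt_mul_sqrt Finset.univ x y
  have h2 := Real.sum_mul_le_sqrt_mul_sqrt Finset.univ (fun k => -(x k)) y
  simp only [neg_sq, neg_mul, Finset.sum_neg_distrib] at h2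
  rw [abs_le]
  unfold dotd euclNorm
  constructor <;> linarith

lemma euclNorm_eq_sqrt_dotd {d : ℕ} (x : Fin d → ℝ) : euclNorm x = Real.sqrt (dotd x x) := by
  unfold euclNorm dotd
  congr 1
  exact Finset.sum_congr rfl fun k _ => sq (x k)

lemma euclNorm_le_one {d : ℕ} {x : Fin d → ℝ} (h : dotd x x ≤ 1) : euclNorm x ≤ 1 := by
  rw [euclNorm_eq_sqrt_dotd]
  calc Real.sqrt (dotd x x) ≤ Real.sqrt 1 := Real.sqrt_le_sqrt h
    _ = 1 := Real.sqrt_one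

lemma euclNorm_sub_le {d : ℕ} (x y : Fin d → ℝ) : euclNorm (x - y) ≤ euclNorm x + euclNorm y := by
  have e : ∀ z : Fin d → ℝ, euclNorm z = ‖(WithLp.toLp 2 z : EuclideanSpace ℝ (Fin d))‖ := by
    intro z
    rw [EuclideanSpace.norm_eq]
    simp [euclNorm, Real.norm_eq_abs, sq_abs]
  rw [e, e, e, WithLp.toLp_sub]
  exact norm_sub_le _ _

lemma dotd_mulVec {d : ℕ} {Q : Matrix (Fin d) (Fin d) ℝ} (hQ : Qᵀ * Q = 1)
    (a b : Fin d → ℝ) : dotd (Q.mulVec a) (Q.mulVec b) = dotd a b := by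
  show (Q *ᵥ a) ⬝ᵥ (Q *ᵥ b) = a ⬝ᵥ b
  rw [Matrix.dotProduct_mulVec, ← Matrix.transpose_transpose Q, Matrix.vecMul_transpose,
    Matrix.transpose_transpose, Matrix.mulVec_mulVec, hQ, Matrix.one_mulVec]

lemma isClosed_msupport {α : Type*} [TopologicalSpace α] [MeasurableSpace α] (μ : Measure α) :
    IsClosed (msupport μ) := by
  rw [← isOpen_compl_iff, isOpen_iff_forall_mem_open]
  intro x hx
  simp only [msupport, Set.mem_compl_iff, Set.mem_setOf_eq, not_forall] at hx
  obtain ⟨U, hU, hxU, hμU⟩ := hx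
  refine ⟨U, fun y hy hymem => ?_, hU, hxU⟩
  exact absurd (hymem U hU hy) (by simpa using hμU)

lemma ae_mem_msupport {α : Type*} [TopologicalSpace α] [SecondCountableTopology α]
    [MeasurableSpace α] (μ : Measure α) : ∀ᵐ x ∂μ, x ∈ msupport μ := by
  rw [Filter.eventually_iff, mem_ae_iff]
  apply measure_null_of_locally_null
  intro x hx
  simp only [Set.mem_compl_iff, msupport, Set.mem_setOf_eq, not_forall] at hx
  obtain ⟨U, hU, hxU, hμU⟩ := hx
  exact ⟨U, mem_nhdsWithin_of_mem_nhds (hU.mem_nhds hxU), by simpa using hμU⟩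

lemma map_eval_pi {ι : Type*} [Fintype ι] {α : ι → Type*} [∀ i, MeasurableSpace (α i)]
    (μ : ∀ i, Measure (α i)) [∀ i, IsProbabilityMeasure (μ i)] (i : ι) :
    (Measure.pi μ).map (Function.eval i) = μ i := by
  ext s hs
  rw [Measure.map_apply (measurable_pi_apply i) hs, Set.eval_preimage, Measure.pi_pi]
  rw [Finset.prod_eq_single i (fun j _ hj => by simp [Function.update_of_ne hj])
    (fun h => absurd (Finset.mem_univ i) h)]
  simp


section Batch2
variable {d n : ℕ}

instance : IsProbabilityMeasure (volume.restrict (Set.Icc (0:ℝ) 1)) := by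
  constructor
  rw [Measure.restrict_apply_univ]
  simp

instance : IsProbabilityMeasure (pairUniform n) := by
  unfold pairUniform; infer_instance

lemma measurable_dotd_pair :
    Measurable fun p : (Fin d → ℝ) × (Fin d → ℝ) => dotd p.1 p.2 := by
  unfold dotd
  exact Finset.measurable_sum _ fun k _ =>
    ((measurable_pi_apply k).comp measurable_fst).mul
      ((measurable_pi_apply k).comp measurable_snd)

lemma measurable_adjOf :
    Measurable fun w : ((Fin n × Fin n) → ℝ) × (Fin n → Fin d → ℝ) => adjOf 1 w.2 w.1 := by
  apply measurable_pi_lambda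
  intro i
  apply measurable_pi_lambda
  intro j
  by_cases hij : i = j
  · simp only [adjOf, if_pos hij]
    exact measurable_const
  · simp only [adjOf, if_neg hij]
    apply Measurable.ite _ measurable_const measurable_const
    have h1 : Measurable fun w : ((Fin n × Fin n) → ℝ) × (Fin n → Fin d → ℝ) =>
        w.1 (min i j, max i j) := (measurable_pi_apply _).comp measurable_fst
    have h2 : Measurable fun w : ((Fin n × Fin n) → ℝ) × (Fin n → Fin d → ℝ) =>
        (1:ℝ) * dotd (w.2 i) (w.2 j) := by
      apply Measurable.const_mul
      have : Measurable fun w : ((Fin n × Fin n) → ℝ) × (Fin n → Fin d → ℝ) =>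
          (w.2 i, w.2 j) :=
        ((measurable_pi_apply i).comp measurable_snd).prodMk
          ((measurable_pi_apply j).comp measurable_snd)
      exact measurable_dotd_pair.comp this
    exact measurableSet_lt h1 h2

lemma adjOf_nonneg (X : Fin n → Fin d → ℝ) (u : (Fin n × Fin n) → ℝ) (i j : Fin n) :
    0 ≤ adjOf 1 X u i j := by
  unfold adjOf; split_ifs <;> norm_num

lemma adjOf_le_one (X : Fin n → Fin d → ℝ) (u : (Fin n × Fin n) → ℝ) (i j : Fin n) :
    adjOf 1 X u i j ≤ 1 := by
  unfold adjOf; split_ifs <;> norm_num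

lemma adjOf_diag (X : Fin n → Fin d → ℝ) (u : (Fin n × Fin n) → ℝ) (i : Fin n) :
    adjOf 1 X u i i = 0 := by
  unfold adjOf; simp

lemma measurable_dGM :
    Measurable fun q : (Fin n → Fin n → ℝ) × (Fin n → Fin n → ℝ) => dGM q.1 q.2 := by
  unfold dGM
  apply Measurable.iInf
  intro σ
  apply Measurable.div_const
  apply Measurable.const_mul
  apply Finset.measurable_sum
  intro i _
  apply Finset.measurable_sum
  intro j _
  apply Measurable.abs
  exact (((measurable_pi_apply i).comp measurable_fst).comp measurable_id |>.eval (a := j)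
      |>.sub (((measurable_pi_apply (σ i)).comp measurable_snd).eval (a := σ j)) (f := fun q : (Fin n → Fin n → ℝ) × (Fin n → Fin n → ℝ) => q.1 i j))

lemma dGM_nonneg (A B : Fin n → Fin n → ℝ) : 0 ≤ dGM A B := by
  apply le_ciInf
  intro σ
  positivity

lemma dGM_le_id (A B : Fin n → Fin n → ℝ) :
    dGM A B ≤ ((n.choose 2 : ℝ))⁻¹ * (∑ i, ∑ j, |A i j - B i j|) / 2 := by
  have := ciInf_le (f := fun σ : Equiv.Perm (Fin n) =>
    ((n.choose 2 : ℝ))⁻¹ * (∑ i, ∑ j, |A i j - B (σ i) (σ j)|) / 2)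
    (Finite.bddBelow_range _) 1
  unfold dGM
  simpa using this

lemma integrable_of_bound {α : Type*} [MeasurableSpace α] (μ : Measure α) [IsFiniteMeasure μ]
    {f : α → ℝ} (hf : AEStronglyMeasurable f μ) (C : ℝ) (h : ∀ᵐ x ∂μ, |f x| ≤ C) :
    Integrable f μ :=
  Integrable.mono' (integrable_const C) hf (h.mono fun x hx => by simpa using hx)

lemma two_mul_choose_two (n : ℕ) : (n : ℝ) * ((n : ℝ) - 1) ≤ 2 * (n.choose 2 : ℝ) := by
  rcases Nat.eq_zero_or_pos n with h | h
  · subst h; norm_num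
  · have : n * (n-1) = 2 * n.choose 2 := by
      rw [Nat.choose_two_right, Nat.mul_div_cancel' ]
      rcases Nat.even_or_odd n with he | ho
      · exact Dvd.dvd.mul_right he.two_dvd _
      · exact Dvd.dvd.mul_left (Nat.Odd.sub_odd ho odd_one).two_dvd _
    have h2 : ((n * (n-1) : ℕ) : ℝ) = 2 * (n.choose 2:ℝ) := by
      rw [this]; push_cast; ring
    rw [← h2]
    push_cast [Nat.cast_sub h]
    ring_nf
    exact le_refl _

end Batch2

section Main
variable {d n : ℕ}

lemma integrable_bdd_meas {α : Type*} [MeasurableSpace α] (μ : Measure α) [IsFiniteMeasure μ]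
    {f : α → ℝ} (hf : Measurable f) (C : ℝ) (h : ∀ x, |f x| ≤ C) : Integrable f μ :=
  integrable_of_bound μ hf.aestronglyMeasurable C (Filter.Eventually.of_forall h)

lemma measurable_A1 (i j : Fin n) :
    Measurable (fun w : ((Fin n × Fin n) → ℝ) × (Fin n → (Fin d → ℝ) × (Fin d → ℝ)) =>
      adjOf 1 (fun k => (w.2 k).1) w.1 i j) := by
  have h0 : Measurable (fun w : ((Fin n × Fin n) → ℝ) × (Fin n → (Fin d → ℝ) × (Fin d → ℝ)) =>
      ((w.1, fun k => (w.2 k).1) : ((Fin n × Fin n) → ℝ) × (Fin n → Fin d → ℝ))) :=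
    measurable_fst.prodMk (measurable_pi_lambda _ fun k =>
      measurable_fst.comp ((measurable_pi_apply k).comp measurable_snd))
  exact (measurable_pi_apply j).comp
    ((measurable_pi_apply i).comp (measurable_adjOf.comp h0))

lemma measurable_A2 (i j : Fin n) :
    Measurable (fun w : ((Fin n × Fin n) → ℝ) × (Fin n → (Fin d → ℝ) × (Fin d → ℝ)) =>
      adjOf 1 (fun k => (w.2 k).2) w.1 i j) := by
  have h0 : Measurable (fun w : ((Fin n × Fin n) → ℝ) × (Fin n → (Fin d → ℝ) × (Fin d → ℝ)) =>
      ((w.1, fun k => (w.2 k).2) : ((Fin n × Fin n) → ℝ) × (Fin n → Fin d → ℝ))) :=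
    measurable_fst.prodMk (measurable_pi_lambda _ fun k =>
      measurable_snd.comp ((measurable_pi_apply k).comp measurable_snd))
  exact (measurable_pi_apply j).comp
    ((measurable_pi_apply i).comp (measurable_adjOf.comp h0))

lemma per_pair (γ₀ : Measure ((Fin d → ℝ) × (Fin d → ℝ))) [IsProbabilityMeasure γ₀]
    (hae : ∀ᵐ q ∂γ₀, euclNorm q.1 ≤ 1 ∧ euclNorm q.2 ≤ 1)
    {i j : Fin n} (hij : i ≠ j) :
    ∫ w, |adjOf 1 (fun k => (w.2 k).1) w.1 i j - adjOf 1 (fun k => (w.2 k).2) w.1 i j|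
        ∂((pairUniform n).prod (Measure.pi fun _ : Fin n => γ₀))
      ≤ 2 * ∫ q, euclNorm (q.1 - q.2) ∂γ₀ := by
  classical
  set μU := pairUniform n with hμU
  set μY := (Measure.pi fun _ : Fin n => γ₀) with hμY
  set c : (Fin d → ℝ) × (Fin d → ℝ) → ℝ := fun q => euclNorm (q.1 - q.2) with hc
  have hc_cont : Continuous c := continuous_euclNorm.comp (continuous_fst.sub continuous_snd)
  set F : ((Fin n × Fin n) → ℝ) × (Fin n → (Fin d → ℝ) × (Fin d → ℝ)) → ℝ :=
    fun w => |adjOf 1 (fun k => (w.2 k).1) w.1 i j - adjOf 1 (fun k => (w.2 k).2) w.1 i j|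
    with hF
  have hFm : Measurable F := ((measurable_A1 i j).sub (measurable_A2 i j)).abs
  have hFbd : ∀ w, |F w| ≤ 1 := by
    intro w
    rw [abs_abs, abs_sub_le_iff]
    constructor <;>
      [(have h1 := adjOf_le_one (fun k => ((w.2 k).1)) w.1 i j;
        have h2 := adjOf_nonneg (fun k => ((w.2 k).2)) w.1 i j);
       (have h1 := adjOf_le_one (fun k => ((w.2 k).2)) w.1 i j;
        have h2 := adjOf_nonneg (fun k => ((w.2 k).1)) w.1 i j)] <;> linarith
  have hFint : Integrable F (μU.prod μY) := integrable_bdd_meas _ hFm 1 hFbd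
  have hAEY : ∀ᵐ Y ∂μY, ∀ k, euclNorm ((Y k).1) ≤ 1 ∧ euclNorm ((Y k).2) ≤ 1 :=
    eventually_all.2 fun k =>
      (Measure.tendsto_eval_ae_ae (μ := fun _ : Fin n => γ₀) (i := k)).eventually hae
  have hint_ck : ∀ k : Fin n, Integrable (fun Y : Fin n → (Fin d → ℝ) × (Fin d → ℝ) =>
      c (Y k)) μY := by
    intro k
    apply integrable_of_bound μY
      ((hc_cont.measurable.comp (measurable_pi_apply k)).aestronglyMeasurable) 2
    filter_upwards [hAEY] with Y hY
    simp only [Function.comp_apply]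
    rw [abs_of_nonneg (euclNorm_nonneg _)]
    calc euclNorm ((Y k).1 - (Y k).2) ≤ euclNorm ((Y k).1) + euclNorm ((Y k).2) :=
          euclNorm_sub_le _ _
      _ ≤ 2 := by have := hY k; linarith [this.1, this.2]
  have hck : ∀ k : Fin n, ∫ Y, c (Y k) ∂μY = ∫ q, c q ∂γ₀ := by
    intro k
    have h2 : ∫ q, c q ∂((Measure.pi fun _ : Fin n => γ₀).map (Function.eval k))
        = ∫ Y, c (Function.eval k Y) ∂(Measure.pi fun _ : Fin n => γ₀) :=
      integral_map (measurable_pi_apply k).aemeasurable hc_cont.aestronglyMeasurable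
    rw [map_eval_pi] at h2
    rw [hμY, ← h2]
  rw [integral_prod_symm _ hFint]
  have key : ∀ᵐ Y ∂μY, (∫ u, F (u, Y) ∂μU) ≤ c (Y i) + c (Y j) := by
    filter_upwards [hAEY] with Y hY
    set a := dotd ((Y i).1) ((Y j).1) with ha
    set b := dotd ((Y i).2) ((Y j).2) with hb
    set e : Fin n × Fin n := (min i j, max i j) with he
    set s : Set ℝ := Set.Ico (min a b) (max a b) with hs
    have hsm : MeasurableSet s := measurableSet_Ico
    have step1 : (∫ u, F (u, Y) ∂μU) ≤ |a - b| := by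
      have hptw : ∀ u : (Fin n × Fin n) → ℝ,
          F (u, Y) ≤ s.indicator (1 : ℝ → ℝ) (u e) := by
        intro u
        have hFe : F (u, Y) = |(if u e < a then (1:ℝ) else 0) - (if u e < b then (1:ℝ) else 0)| := by
          simp only [hF, adjOf, if_neg hij, one_mul]
          rfl
        rw [hFe]
        by_cases h1 : u e < a <;> by_cases h2 : u e < b
        · simp only [if_pos h1, if_pos h2, sub_self, abs_zero]
          exact Set.indicator_nonneg (by intro x _; norm_num) _
        · have hmem : u e ∈ s := ⟨le_trans (min_le_right a b) (le_of_not_gt h2),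
            lt_of_lt_of_le h1 (le_max_left a b)⟩
          rw [Set.indicator_of_mem hmem, Pi.one_apply]
          simp only [if_pos h1, if_neg h2, sub_zero, abs_one, le_refl]
        · have hmem : u e ∈ s := ⟨le_trans (min_le_left a b) (le_of_not_gt h1),
            lt_of_lt_of_le h2 (le_max_right a b)⟩
          rw [Set.indicator_of_mem hmem, Pi.one_apply]
          simp only [if_neg h1, if_pos h2, zero_sub, abs_neg, abs_one, le_refl]
        · simp only [if_neg h1, if_neg h2, sub_self, abs_zero]
          exact Set.indicator_nonneg (by intro x _; norm_num) _
      have hindm : Measurable (s.indicator (1 : ℝ → ℝ)) :=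
        measurable_const.indicator hsm
      have hindbd : ∀ t : ℝ, |s.indicator (1 : ℝ → ℝ) t| ≤ 1 := by
        intro t
        rw [Set.indicator_apply]
        simp only [Pi.one_apply]
        split_ifs <;> norm_num
      calc (∫ u, F (u, Y) ∂μU)
          ≤ ∫ u, s.indicator (1 : ℝ → ℝ) (u e) ∂μU := by
            apply integral_mono
              (integrable_bdd_meas _ (hFm.comp (measurable_id.prodMk measurable_const)) 1
                (fun u => hFbd (u, Y)))
              (integrable_bdd_meas _ (hindm.comp (measurable_pi_apply e)) 1
                (fun u => hindbd (u e)))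
              hptw
        _ = ((volume.restrict (Set.Icc (0:ℝ) 1)) s).toReal := by
            have h2 : ∫ t, s.indicator (1 : ℝ → ℝ) t
                ∂((Measure.pi fun _ : Fin n × Fin n =>
                    volume.restrict (Set.Icc (0:ℝ) 1)).map (Function.eval e))
                = ∫ u, s.indicator (1 : ℝ → ℝ) (Function.eval e u)
                  ∂(Measure.pi fun _ : Fin n × Fin n => volume.restrict (Set.Icc (0:ℝ) 1)) :=
              integral_map (measurable_pi_apply e).aemeasurable hindm.aestronglyMeasurable
            rw [map_eval_pi] at h2
            rw [hμU]
            unfold pairUniform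
            rw [← h2, MeasureTheory.integral_indicator_one hsm, measureReal_def]
        _ ≤ |a - b| := by
            calc ((volume.restrict (Set.Icc (0:ℝ) 1)) s).toReal
                ≤ (volume s).toReal := by
                  apply ENNReal.toReal_mono
                  · rw [hs, Real.volume_Ico]; exact ENNReal.ofReal_ne_top
                  · rw [Measure.restrict_apply hsm]
                    exact measure_mono Set.inter_subset_left
              _ = max a b - min a b := by
                  rw [hs, Real.volume_Ico, ENNReal.toReal_ofReal (by simp [sub_nonneg, min_le_max])]
              _ = |a - b| := by rw [max_sub_min_eq_abs a b, abs_sub_comm]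
    have step2 : |a - b| ≤ c (Y i) + c (Y j) := by
      have keyab : a - b = dotd ((Y i).1 - (Y i).2) ((Y j).1)
          + dotd ((Y i).2) ((Y j).1 - (Y j).2) := by
        simp only [ha, hb, dotd, Pi.sub_apply]
        rw [← Finset.sum_add_distrib, ← Finset.sum_sub_distrib]
        exact Finset.sum_congr rfl fun k _ => by ring
      calc |a - b| ≤ |dotd ((Y i).1 - (Y i).2) ((Y j).1)|
            + |dotd ((Y i).2) ((Y j).1 - (Y j).2)| := keyab ▸ abs_add_le _ _
        _ ≤ euclNorm ((Y i).1 - (Y i).2) * euclNorm ((Y j).1)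
            + euclNorm ((Y i).2) * euclNorm ((Y j).1 - (Y j).2) :=
          add_le_add (abs_dotd_le _ _) (abs_dotd_le _ _)
        _ ≤ euclNorm ((Y i).1 - (Y i).2) * 1 + 1 * euclNorm ((Y j).1 - (Y j).2) :=
          add_le_add
            (mul_le_mul_of_nonneg_left (hY j).1 (euclNorm_nonneg _))
            (mul_le_mul_of_nonneg_right (hY i).2 (euclNorm_nonneg _))
        _ = c (Y i) + c (Y j) := by simp [hc]
    exact step1.trans step2
  calc (∫ Y, ∫ u, F (u, Y) ∂μU ∂μY) ≤ ∫ Y, (c (Y i) + c (Y j)) ∂μY := by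
        apply integral_mono_ae hFint.integral_prod_right
          ((hint_ck i).add (hint_ck j)) key
    _ = (∫ q, c q ∂γ₀) + ∫ q, c q ∂γ₀ := by
        rw [integral_add (hint_ck i) (hint_ck j), hck i, hck j]
    _ = 2 * ∫ q, c q ∂γ₀ := by ring

lemma measurable_mulVec {d : ℕ} (Q : Matrix (Fin d) (Fin d) ℝ) : Measurable Q.mulVec := by
  apply measurable_pi_lambda
  intro i
  show Measurable fun v : Fin d → ℝ => ∑ k, Q i k * v k
  exact Finset.measurable_sum _ fun k _ => (measurable_pi_apply (X := fun _ : Fin d => ℝ) k).const_mul (Q i k)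

set_option maxHeartbeats 1000000 in
lemma main_estimate {d n : ℕ} (F₁ F₂ : Measure (Fin d → ℝ))
    [IsProbabilityMeasure F₁] [IsProbabilityMeasure F₂]
    (hF₁ : InnerProductDistribution d F₁) (hF₂ : InnerProductDistribution d F₂)
    (p : ℝ) (hp : 1 ≤ p) (Q : Matrix (Fin d) (Fin d) ℝ) (hQ : Qᵀ * Q = 1)
    (γ₀ : Measure ((Fin d → ℝ) × (Fin d → ℝ)))
    (hγ : γ₀ ∈ Couplings F₁ (F₂.map Q.mulVec)) :
    WGMpow p (adjLaw d n F₁) (adjLaw d n F₂) ≤ 2 * ∫ q, euclNorm (q.1 - q.2) ∂γ₀ := by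
  classical
  obtain ⟨hγprob, hfst, hsnd⟩ := hγ
  haveI : IsProbabilityMeasure γ₀ := hγprob
  haveI : IsProbabilityMeasure (F₂.map Q.mulVec) :=
    Measure.isProbabilityMeasure_map (measurable_mulVec Q).aemeasurable
  set μU := pairUniform n with hμU
  set μY := (Measure.pi fun _ : Fin n => γ₀) with hμY
  set r := ∫ q, euclNorm (q.1 - q.2) ∂γ₀ with hr
  have hr0 : 0 ≤ r := integral_nonneg fun q => euclNorm_nonneg _
  -- a.e. support bounds
  have hnormset : MeasurableSet {x : Fin d → ℝ | euclNorm x ≤ 1} :=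
    measurableSet_le continuous_euclNorm.measurable measurable_const
  have hae1 : ∀ᵐ q ∂γ₀, euclNorm q.1 ≤ 1 := by
    have hF : ∀ᵐ x ∂F₁, euclNorm x ≤ 1 :=
      (ae_mem_msupport F₁).mono fun x hx => euclNorm_le_one (hF₁.2 x hx x hx).2
    rw [← hfst] at hF
    exact (ae_map_iff measurable_fst.aemeasurable hnormset).mp hF
  have hae2 : ∀ᵐ q ∂γ₀, euclNorm q.2 ≤ 1 := by
    have hF : ∀ᵐ z ∂F₂, euclNorm (Q.mulVec z) ≤ 1 := by
      refine (ae_mem_msupport F₂).mono fun z hz => ?_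
      rw [euclNorm_eq_sqrt_dotd, dotd_mulVec hQ, ← euclNorm_eq_sqrt_dotd]
      exact euclNorm_le_one (hF₂.2 z hz z hz).2
    have hν : ∀ᵐ y ∂(F₂.map Q.mulVec), euclNorm y ≤ 1 :=
      (ae_map_iff (measurable_mulVec Q).aemeasurable hnormset).mpr hF
    rw [← hsnd] at hν
    exact (ae_map_iff measurable_snd.aemeasurable hnormset).mp hν
  have hae : ∀ᵐ q ∂γ₀, euclNorm q.1 ≤ 1 ∧ euclNorm q.2 ≤ 1 := hae1.and hae2
  -- the coupling of the two adjacency laws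
  set h1f : (Fin n → (Fin d → ℝ) × (Fin d → ℝ)) → (Fin n → Fin d → ℝ) :=
    fun Y k => (Y k).1 with hh1f
  set h2f : (Fin n → (Fin d → ℝ) × (Fin d → ℝ)) → (Fin n → Fin d → ℝ) :=
    fun Y k => (Y k).2 with hh2f
  have hm1 : Measurable h1f := measurable_pi_lambda _ fun k =>
    measurable_fst.comp (measurable_pi_apply k)
  have hm2 : Measurable h2f := measurable_pi_lambda _ fun k =>
    measurable_snd.comp (measurable_pi_apply k)
  set φ : ((Fin n × Fin n) → ℝ) × (Fin n → (Fin d → ℝ) × (Fin d → ℝ)) →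
      (Fin n → Fin n → ℝ) × (Fin n → Fin n → ℝ) :=
    fun w => (adjOf 1 (h1f w.2) w.1, adjOf 1 (h2f w.2) w.1) with hφ
  have hφm : Measurable φ :=
    (measurable_adjOf.comp (measurable_fst.prodMk (hm1.comp measurable_snd))).prodMk
      (measurable_adjOf.comp (measurable_fst.prodMk (hm2.comp measurable_snd)))
  set γ := (μU.prod μY).map φ with hγdef
  set ψ : ((Fin n × Fin n) → ℝ) × (Fin n → Fin d → ℝ) → (Fin n → Fin n → ℝ) :=
    fun v => adjOf 1 v.2 v.1 with hψ
  have hψm : Measurable ψ := measurable_adjOf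
  have adjLaw_eq : ∀ (F : Measure (Fin d → ℝ)), ∀ _ : IsProbabilityMeasure F,
      adjLaw d n F = (μU.prod (Measure.pi fun _ : Fin n => F)).map ψ := by
    intro F _
    unfold adjLaw rdpgLaw rdpgLawOf
    rw [Measure.map_map measurable_fst (hψm.prodMk measurable_snd)]
    rfl
  -- first marginal
  have hmarg1 : γ.map Prod.fst = adjLaw d n F₁ := by
    have mp1 : MeasurePreserving h1f μY (Measure.pi fun _ : Fin n => F₁) := by
      have := measurePreserving_pi (fun _ : Fin n => γ₀) (fun _ : Fin n => F₁)
        (f := fun _ : Fin n => (Prod.fst : (Fin d → ℝ) × (Fin d → ℝ) → Fin d → ℝ))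
        (fun _ => ⟨measurable_fst, hfst⟩)
      exact this
    have mpP1 : MeasurePreserving (Prod.map id h1f) (μU.prod μY)
        (μU.prod (Measure.pi fun _ : Fin n => F₁)) := (MeasurePreserving.id μU).prod mp1
    have e1 : γ.map Prod.fst = (μU.prod μY).map (ψ ∘ Prod.map id h1f) := by
      rw [hγdef, Measure.map_map measurable_fst hφm]
      rfl
    rw [e1, ← Measure.map_map hψm mpP1.measurable, mpP1.map_eq, adjLaw_eq F₁ inferInstance]
  -- second marginal
  have hmarg2 : γ.map Prod.snd = adjLaw d n F₂ := by
    have mp2 : MeasurePreserving h2f μY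
        (Measure.pi fun _ : Fin n => F₂.map Q.mulVec) := by
      have := measurePreserving_pi (fun _ : Fin n => γ₀)
        (fun _ : Fin n => F₂.map Q.mulVec)
        (f := fun _ : Fin n => (Prod.snd : (Fin d → ℝ) × (Fin d → ℝ) → Fin d → ℝ))
        (fun _ => ⟨measurable_snd, hsnd⟩)
      exact this
    have mpP2 : MeasurePreserving (Prod.map id h2f) (μU.prod μY)
        (μU.prod (Measure.pi fun _ : Fin n => F₂.map Q.mulVec)) :=
      (MeasurePreserving.id μU).prod mp2
    have e1 : γ.map Prod.snd = (μU.prod μY).map (ψ ∘ Prod.map id h2f) := by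
      rw [hγdef, Measure.map_map measurable_snd hφm]
      rfl
    rw [e1, ← Measure.map_map hψm mpP2.measurable, mpP2.map_eq]
    -- now reduce ν = F₂ ∘ Q to F₂ using invariance of adjOf
    have mpQ : MeasurePreserving (fun z : Fin n → Fin d → ℝ => fun k => Q.mulVec (z k))
        (Measure.pi fun _ : Fin n => F₂)
        (Measure.pi fun _ : Fin n => F₂.map Q.mulVec) :=
      measurePreserving_pi _ _ (fun _ => ⟨measurable_mulVec Q, rfl⟩)
    have mpPQ : MeasurePreserving
        (Prod.map (id : ((Fin n × Fin n) → ℝ) → _) (fun z : Fin n → Fin d → ℝ => fun k => Q.mulVec (z k)))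
        (μU.prod (Measure.pi fun _ : Fin n => F₂))
        (μU.prod (Measure.pi fun _ : Fin n => F₂.map Q.mulVec)) :=
      (MeasurePreserving.id μU).prod mpQ
    have keyinv : ψ ∘ (Prod.map (id : ((Fin n × Fin n) → ℝ) → _)
        (fun z : Fin n → Fin d → ℝ => fun k => Q.mulVec (z k))) = ψ := by
      funext w
      show adjOf 1 (fun k => Q.mulVec (w.2 k)) w.1 = adjOf 1 w.2 w.1
      funext a b
      unfold adjOf
      rw [dotd_mulVec hQ]
    rw [← mpPQ.map_eq, Measure.map_map hψm mpPQ.measurable, keyinv,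
      adjLaw_eq F₂ inferInstance]
  haveI hγprob2 : IsProbabilityMeasure γ := Measure.isProbabilityMeasure_map hφm.aemeasurable
  have hγmem : γ ∈ Couplings (adjLaw d n F₁) (adjLaw d n F₂) := ⟨hγprob2, hmarg1, hmarg2⟩
  -- dGM ^ p is bounded by the identity-permutation cost
  set C := ((n.choose 2 : ℕ) : ℝ) with hC
  have hC0 : 0 ≤ C := Nat.cast_nonneg _
  set T : ((Fin n × Fin n) → ℝ) × (Fin n → (Fin d → ℝ) × (Fin d → ℝ)) → ℝ :=
    fun w => C⁻¹ * (∑ a, ∑ b, |adjOf 1 (h1f w.2) w.1 a b - adjOf 1 (h2f w.2) w.1 a b|) / 2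
    with hT
  have hTbd : ∀ w, T w ≤ 1 := by
    intro w
    have hsum : (∑ a, ∑ b, |adjOf 1 (h1f w.2) w.1 a b - adjOf 1 (h2f w.2) w.1 a b|)
        ≤ (n : ℝ) * ((n : ℝ) - 1) := by
      calc (∑ a, ∑ b, |adjOf 1 (h1f w.2) w.1 a b - adjOf 1 (h2f w.2) w.1 a b|)
          ≤ ∑ a : Fin n, ∑ b : Fin n, (if a = b then (0:ℝ) else 1) := by
            apply Finset.sum_le_sum
            intro a _
            apply Finset.sum_le_sum
            intro b _
            by_cases hab : a = b
            · subst hab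
              rw [adjOf_diag, adjOf_diag, sub_self, abs_zero, if_pos rfl]
            · rw [if_neg hab, abs_sub_le_iff]
              constructor <;>
                [(have h1 := adjOf_le_one (h1f w.2) w.1 a b;
                  have h2 := adjOf_nonneg (h2f w.2) w.1 a b);
                 (have h1 := adjOf_le_one (h2f w.2) w.1 a b;
                  have h2 := adjOf_nonneg (h1f w.2) w.1 a b)] <;> linarith
        _ = (n : ℝ) * ((n : ℝ) - 1) := by
            have : ∀ a : Fin n, (∑ b : Fin n, if a = b then (0:ℝ) else 1) = (n : ℝ) - 1 := by
              intro a
              have : (∑ b : Fin n, if a = b then (0:ℝ) else 1)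
                  = (∑ b : Fin n, (1:ℝ)) - ∑ b : Fin n, (if a = b then (1:ℝ) else 0) := by
                rw [← Finset.sum_sub_distrib]
                apply Finset.sum_congr rfl
                intro b _
                split_ifs <;> ring
              rw [this, Finset.sum_ite_eq Finset.univ a (fun _ => (1:ℝ))]
              simp
            rw [Finset.sum_congr rfl fun a _ => this a]
            simp [Finset.sum_const]
            try ring
    rcases eq_or_ne C 0 with hCz | hCz
    · rw [hT]
      simp only [hCz, _root_.inv_zero, zero_mul, zero_div]
      norm_num
    · have hCpos : 0 < C := lt_of_le_of_ne hC0 (Ne.symm hCz)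
      rw [hT]
      simp only
      rw [div_le_one (by norm_num : (0:ℝ) < 2)]
      calc C⁻¹ * (∑ a, ∑ b, |adjOf 1 (h1f w.2) w.1 a b - adjOf 1 (h2f w.2) w.1 a b|)
          ≤ C⁻¹ * ((n:ℝ) * ((n:ℝ) - 1)) :=
            mul_le_mul_of_nonneg_left hsum (inv_nonneg.mpr hC0)
        _ ≤ C⁻¹ * (2 * C) :=
            mul_le_mul_of_nonneg_left (two_mul_choose_two n) (inv_nonneg.mpr hC0)
        _ = 2 := by field_simp
  have hT0 : ∀ w, 0 ≤ T w := by
    intro w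
    rw [hT]
    simp only
    positivity
  have hdgm_le : ∀ w, dGM (φ w).1 (φ w).2 ≤ T w := fun w => dGM_le_id _ _
  have hg_le : ∀ w, dGM (φ w).1 (φ w).2 ^ p ≤ T w := by
    intro w
    have h0 := dGM_nonneg (φ w).1 (φ w).2
    have h1 : dGM (φ w).1 (φ w).2 ≤ 1 := (hdgm_le w).trans (hTbd w)
    rcases eq_or_lt_of_le h0 with h | h
    · rw [← h, Real.zero_rpow (by linarith : p ≠ 0)]
      exact hT0 w
    · calc dGM (φ w).1 (φ w).2 ^ p ≤ dGM (φ w).1 (φ w).2 ^ (1:ℝ) :=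
            Real.rpow_le_rpow_of_exponent_ge h h1 hp
        _ = dGM (φ w).1 (φ w).2 := Real.rpow_one _
        _ ≤ T w := hdgm_le w
  -- measurability and integrability
  have hgm : Measurable fun w => dGM (φ w).1 (φ w).2 ^ p :=
    ((Real.continuous_rpow_const (by linarith : (0:ℝ) ≤ p)).measurable).comp
      (measurable_dGM.comp hφm)
  have habs : ∀ a b : Fin n, Measurable fun w :
      ((Fin n × Fin n) → ℝ) × (Fin n → (Fin d → ℝ) × (Fin d → ℝ)) =>
      |adjOf 1 (h1f w.2) w.1 a b - adjOf 1 (h2f w.2) w.1 a b| :=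
    fun a b => ((measurable_A1 a b).sub (measurable_A2 a b)).abs
  have habsint : ∀ a b : Fin n, Integrable (fun w :
      ((Fin n × Fin n) → ℝ) × (Fin n → (Fin d → ℝ) × (Fin d → ℝ)) =>
      |adjOf 1 (h1f w.2) w.1 a b - adjOf 1 (h2f w.2) w.1 a b|) (μU.prod μY) := by
    intro a b
    apply integrable_bdd_meas _ (habs a b) 1
    intro w
    rw [abs_abs, abs_sub_le_iff]
    constructor <;>
      [(have h1 := adjOf_le_one (h1f w.2) w.1 a b;
        have h2 := adjOf_nonneg (h2f w.2) w.1 a b);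
       (have h1 := adjOf_le_one (h2f w.2) w.1 a b;
        have h2 := adjOf_nonneg (h1f w.2) w.1 a b)] <;> linarith
  have hgint : Integrable (fun w => dGM (φ w).1 (φ w).2 ^ p) (μU.prod μY) := by
    apply integrable_bdd_meas _ hgm 1
    intro w
    rw [abs_of_nonneg (Real.rpow_nonneg (dGM_nonneg _ _) _)]
    exact (hg_le w).trans (hTbd w)
  have hTint : Integrable T (μU.prod μY) := by
    apply integrable_bdd_meas _ ?_ 1 fun w => by
      rw [abs_of_nonneg (hT0 w)]; exact hTbd w
    apply Measurable.div_const
    apply Measurable.const_mul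
    exact Finset.measurable_sum _ fun a _ => Finset.measurable_sum _ fun b _ => habs a b
  -- the chain of inequalities
  have hWle : WGMpow p (adjLaw d n F₁) (adjLaw d n F₂) ≤ ∫ q, dGM q.1 q.2 ^ p ∂γ := by
    apply csInf_le
    · refine ⟨0, ?_⟩
      rintro x ⟨γ', -, rfl⟩
      exact integral_nonneg fun q => Real.rpow_nonneg (dGM_nonneg _ _) _
    · exact ⟨γ, hγmem, rfl⟩
  have hmapint : ∫ q, dGM q.1 q.2 ^ p ∂γ = ∫ w, dGM (φ w).1 (φ w).2 ^ p ∂(μU.prod μY) := by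
    rw [hγdef]
    exact integral_map hφm.aemeasurable
      (((Real.continuous_rpow_const (by linarith : (0:ℝ) ≤ p)).measurable).comp
        measurable_dGM).aestronglyMeasurable
  have hTval : ∫ w, T w ∂(μU.prod μY) ≤ 2 * r := by
    have hTrw : ∀ w, T w = (C⁻¹ / 2) *
        ∑ a, ∑ b, |adjOf 1 (h1f w.2) w.1 a b - adjOf 1 (h2f w.2) w.1 a b| := by
      intro w; rw [hT]; ring
    calc ∫ w, T w ∂(μU.prod μY)
        = (C⁻¹ / 2) * ∫ w, (∑ a, ∑ b,
            |adjOf 1 (h1f w.2) w.1 a b - adjOf 1 (h2f w.2) w.1 a b|) ∂(μU.prod μY) := by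
          simp_rw [hTrw]
          exact integral_const_mul _ _
      _ = (C⁻¹ / 2) * ∑ a : Fin n, ∑ b : Fin n, ∫ w,
            |adjOf 1 (h1f w.2) w.1 a b - adjOf 1 (h2f w.2) w.1 a b| ∂(μU.prod μY) := by
          rw [integral_finset_sum _ fun a _ => integrable_finset_sum _ fun b _ => habsint a b]
          congr 1
          exact Finset.sum_congr rfl fun a _ => integral_finset_sum _ fun b _ => habsint a b
      _ ≤ (C⁻¹ / 2) * ∑ a : Fin n, ∑ b : Fin n, (if a = b then (0:ℝ) else 2 * r) := by
          apply mul_le_mul_of_nonneg_left _ (by positivity)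
          apply Finset.sum_le_sum
          intro a _
          apply Finset.sum_le_sum
          intro b _
          by_cases hab : a = b
          · subst hab
            rw [if_pos rfl]
            have : ∀ w : ((Fin n × Fin n) → ℝ) × (Fin n → (Fin d → ℝ) × (Fin d → ℝ)),
                |adjOf 1 (h1f w.2) w.1 a a - adjOf 1 (h2f w.2) w.1 a a| = 0 := by
              intro w
              rw [adjOf_diag, adjOf_diag, sub_self, abs_zero]
            simp_rw [this]
            simp
          · rw [if_neg hab]
            exact per_pair γ₀ hae hab
      _ ≤ 2 * r := by
          have hsum2 : (∑ a : Fin n, ∑ b : Fin n, (if a = b then (0:ℝ) else 2 * r))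
              = (n : ℝ) * ((n : ℝ) - 1) * (2 * r) := by
            have : ∀ a : Fin n, (∑ b : Fin n, if a = b then (0:ℝ) else 2 * r)
                = ((n : ℝ) - 1) * (2 * r) := by
              intro a
              have h1 : (∑ b : Fin n, if a = b then (0:ℝ) else 2 * r)
                  = (∑ b : Fin n, (2*r:ℝ)) - ∑ b : Fin n, (if a = b then (2*r:ℝ) else 0) := by
                rw [← Finset.sum_sub_distrib]
                apply Finset.sum_congr rfl
                intro b _
                split_ifs <;> ring
              rw [h1, Finset.sum_ite_eq Finset.univ a (fun _ => (2*r:ℝ))]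
              simp [Finset.sum_const]
              ring
            rw [Finset.sum_congr rfl fun a _ => this a]
            simp [Finset.sum_const]
            try ring
          rw [hsum2]
          calc (C⁻¹ / 2) * ((n : ℝ) * ((n : ℝ) - 1) * (2 * r))
              ≤ (C⁻¹ / 2) * ((2 * C) * (2 * r)) := by
                apply mul_le_mul_of_nonneg_left _ (by positivity)
                apply mul_le_mul_of_nonneg_right (two_mul_choose_two n) (by positivity)
            _ = (C⁻¹ * C) * (2 * r) := by ring
            _ ≤ 1 * (2 * r) := by
                apply mul_le_mul_of_nonneg_right _ (by positivity)
                rcases eq_or_ne C 0 with h | h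
                · simp [h]
                · rw [inv_mul_cancel₀ h]
            _ = 2 * r := one_mul _
  calc WGMpow p (adjLaw d n F₁) (adjLaw d n F₂) ≤ ∫ q, dGM q.1 q.2 ^ p ∂γ := hWle
    _ = ∫ w, dGM (φ w).1 (φ w).2 ^ p ∂(μU.prod μY) := hmapint
    _ ≤ ∫ w, T w ∂(μU.prod μY) := integral_mono hgint hTint hg_le
    _ ≤ 2 * r := hTval

end Main

end GMHelpers

/-- Lemma `GMLPwasser`: for random dot product graphs `A₁ ~ RDPG(F₁,n)` and
`A₂ ~ RDPG(F₂,n)`, `W_{GM,p}^p(A₁,A₂) ≤ 2 d̊₁(F₁,F₂)` for every `p ≥ 1`. -/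
theorem wasserstein_graph_matching_le_ring_wasserstein
    {d n : ℕ} (F₁ F₂ : Measure (Fin d → ℝ))
    [IsProbabilityMeasure F₁] [IsProbabilityMeasure F₂]
    (hF₁ : InnerProductDistribution d F₁) (hF₂ : InnerProductDistribution d F₂) :
    ∀ p : ℝ, 1 ≤ p →
      WGMpow p (adjLaw d n F₁) (adjLaw d n F₂) ≤ 2 * ringWasserstein 1 F₁ F₂ := by
  intro p hp
  unfold ringWasserstein
  set S := {r | ∃ Q : Matrix (Fin d) (Fin d) ℝ, Qᵀ * Q = 1 ∧
    r = wassersteinP 1 F₁ (F₂.map fun x => Q.mulVec x)} with hSdef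
  have hSne : S.Nonempty :=
    ⟨wassersteinP 1 F₁ (F₂.map fun x => (1 : Matrix (Fin d) (Fin d) ℝ).mulVec x),
      1, by rw [Matrix.transpose_one, Matrix.one_mul], rfl⟩
  have hlb : ∀ r ∈ S, WGMpow p (adjLaw d n F₁) (adjLaw d n F₂) / 2 ≤ r := by
    rintro r ⟨Q, hQ, rfl⟩
    haveI : IsProbabilityMeasure (F₂.map fun x => Q.mulVec x) :=
      Measure.isProbabilityMeasure_map (GMHelpers.measurable_mulVec Q).aemeasurable
    unfold wassersteinP
    apply le_csInf
    · refine ⟨_, ⟨F₁.prod (F₂.map fun x => Q.mulVec x), ⟨inferInstance, ?_, ?_⟩, rfl⟩⟩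
      · rw [Measure.map_fst_prod]; simp
      · rw [Measure.map_snd_prod]; simp
    · rintro t ⟨γ₀, hγ₀, rfl⟩
      simp only [one_div_one, Real.rpow_one]
      have hme := GMHelpers.main_estimate (n := n) F₁ F₂ hF₁ hF₂ p hp Q hQ γ₀ hγ₀
      linarith
  have hfin := le_csInf hSne hlb
  linarith

end
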